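/- The Boole numbers Bl_n(λ) := Bl_n(0|λ) satisfy, for every m ≥ 0, ∑_{n=0}^{m} Bl_n(λ) S₂(m,n) = (1/2) λ^m E_m, where E_m = E_m(0) are the Euler numbers. -/

import Mathlib

open Finset PowerSeries

/-- Stirling numbers of the second kind. -/
def stirling2 : ℕ → ℕ → ℕ
  | 0, 0 => 1
  | 0, _ + 1 => 0
  | _ + 1, 0 => 0
  | n + 1, k + 1 => (k + 1) * stirling2 n (k + 1) + stirling2 n k

/-- Unsigned Stirling numbers of the first kind. -/
def stirling1 : ℕ → ℕ → ℕ
  | 0, 0 => 1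
  | 0, _ + 1 => 0
  | _ + 1, 0 => 0
  | n + 1, k + 1 => n * stirling1 n (k + 1) + stirling1 n k

/-- Signed Stirling numbers of the first kind. -/
def s1 (n l : ℕ) : ℚ := (-1) ^ (n - l) * (stirling1 n l : ℚ)

/-- The exponential generating function `∑ a n * t^n / n!` as a power series over `ℚ`. -/
noncomputable def egf (a : ℕ → ℚ) : PowerSeries ℚ :=
  PowerSeries.mk fun n => a n / (Nat.factorial n : ℚ)

/-- The binomial series `(1+t)^x = ∑ (x)_n t^n / n!` for `x : ℚ`. -/
noncomputable def onePlusTPow (x : ℚ) : PowerSeries ℚ :=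
  egf fun n => ∏ i ∈ Finset.range n, (x - i)

/-- `e^{xt}` as a power series over `ℚ`. -/
noncomputable def expXT (x : ℚ) : PowerSeries ℚ := egf fun n => x ^ n

/-!
Substituting `t = eᵘ - 1` into `∑ Bl_n tⁿ/n! = 1/(1 + (1+t)^λ)` turns the left side into
`∑_m (∑_n Bl_n S₂(m,n)) u^m/m!`, because `(eᵘ - 1)ⁿ/n! = ∑_m S₂(m,n) u^m/m!`, and the right side
into `1/(1 + e^{λu})`. Rescaling `u ↦ λu` in `∑ E_m u^m/m! = 2/(eᵘ + 1)` shows that the latter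
is `½ ∑_m λ^m E_m u^m/m!`.
-/

open scoped Nat

theorem stirling2_eq_stirlingSecond : ∀ n k, stirling2 n k = Nat.stirlingSecond n k
  | 0, 0 | 0, _ + 1 | _ + 1, 0 => rfl
  | n + 1, k + 1 => by
    rw [stirling2, Nat.stirlingSecond_succ_succ, stirling2_eq_stirlingSecond n,
      stirling2_eq_stirlingSecond n]

namespace PowerSeries

theorem coeff_subst_eq_sum_range {R : Type*} [CommRing R] {a : R⟦X⟧}
    (ha : constantCoeff a = 0) (f : R⟦X⟧) (m : ℕ) :
    coeff m (f.subst a) = ∑ n ∈ range (m + 1), coeff n f * coeff m (a ^ n) := by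
  rw [coeff_subst' (.of_constantCoeff_zero' ha)]
  refine finsum_eq_sum_of_support_subset _ fun n hn => ?_
  by_contra hnm
  have hmn : (m : ℕ∞) < n := by
    simp only [coe_range, Set.mem_Iio, not_lt] at hnm
    exact_mod_cast hnm
  exact hn <| by
    simp [coeff_of_lt_order m (hmn.trans_le (le_order_pow_of_constantCoeff_eq_zero n ha))]

theorem derivative_exp_sub_one_pow_succ (A : Type*) [CommRing A] [Algebra ℚ A] (n : ℕ) :
    d⁄dX A ((exp A - 1) ^ (n + 1)) =
      ((n : A) + 1) • ((exp A - 1) ^ (n + 1) + (exp A - 1) ^ n) := by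
  rw [Derivation.leibniz_pow, map_sub, derivative_exp, Derivation.map_one_eq_zero, sub_zero,
    Nat.add_sub_cancel, smul_eq_mul, ← Nat.cast_succ, Nat.cast_smul_eq_nsmul, nsmul_eq_mul]
  ring

-- Comparing coefficients in `derivative_exp_sub_one_pow_succ` gives exactly the recurrence
-- defining `Nat.stirlingSecond`.
theorem coeff_exp_sub_one_pow (k n : ℕ) :
    coeff k ((exp ℚ - 1) ^ n) = (n ! * Nat.stirlingSecond k n / k ! : ℚ) := by
  induction k generalizing n with
  | zero =>
    cases n <;> simp [constantCoeff_exp]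
  | succ k ih =>
    cases n with
    | zero => simp [coeff_one]
    | succ n =>
      have hrec := congrArg (coeff k) (derivative_exp_sub_one_pow_succ ℚ n)
      rw [coeff_derivative] at hrec
      simp only [map_smul, map_add, ih, smul_eq_mul] at hrec
      rw [Nat.stirlingSecond_succ_succ, eq_div_iff (by positivity)]
      field_simp at hrec
      push_cast [Nat.factorial_succ] at hrec ⊢
      linear_combination hrec

end PowerSeries

theorem coeff_egf (a : ℕ → ℚ) (n : ℕ) : coeff n (egf a) = a n / n ! := coeff_mk _ _

theorem rescale_egf (c : ℚ) (a : ℕ → ℚ) : rescale c (egf a) = egf fun n => c ^ n * a n := by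
  ext n
  rw [coeff_rescale, coeff_egf, coeff_egf, mul_div_assoc]

theorem onePlusTPow_zero : onePlusTPow 0 = 1 := by
  ext (_ | n) <;> simp [onePlusTPow, coeff_egf, coeff_one, prod_range_succ']

theorem expXT_zero : expXT 0 = 1 := by
  ext (_ | n) <;> simp [expXT, coeff_egf, coeff_one]

theorem coeff_subst_exp_sub_one_egf (a : ℕ → ℚ) (m : ℕ) :
    coeff m ((egf a).subst (exp ℚ - 1)) = (∑ n ∈ range (m + 1), a n * stirling2 m n) / m ! := by
  rw [coeff_subst_eq_sum_range (by simp [constantCoeff_exp]), sum_div]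
  refine sum_congr rfl fun n _ => ?_
  rw [coeff_egf, coeff_exp_sub_one_pow, stirling2_eq_stirlingSecond]
  field_simp

theorem subst_exp_sub_one_egf_mul {L : ℕ} {Bl : ℕ → ℚ}
    (hBl : egf Bl * (1 + (1 + X) ^ L) = onePlusTPow 0) :
    (egf Bl).subst (exp ℚ - 1) * (1 + exp ℚ ^ L) = 1 := by
  have hsubst : HasSubst (exp ℚ - 1) := .of_constantCoeff_zero' (by simp [constantCoeff_exp])
  have h := congrArg (substAlgHom hsubst) hBl
  rw [onePlusTPow_zero, map_one, map_mul, map_add, map_one, map_pow, map_add, map_one,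
    substAlgHom_X, coe_substAlgHom, add_sub_cancel] at h
  exact h

theorem egf_rescale_mul_one_add_exp_pow {E : ℕ → ℚ} (hE : egf E * (exp ℚ + 1) = 2) (L : ℕ) :
    egf (fun m => (L : ℚ) ^ m * E m) * (1 + exp ℚ ^ L) = 2 := by
  have h := congrArg (rescale (L : ℚ)) hE
  rwa [map_mul, map_add, map_one, ← exp_pow_eq_rescale_exp, map_ofNat, rescale_egf,
    add_comm] at h

theorem boole_numbers_stirling2_eq_euler_numbers_general (L : ℕ)
    (Bl : ℕ → ℚ) (E : ℕ → ℚ → ℚ)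
    (hBl : egf Bl * (1 + (1 + PowerSeries.X) ^ L) = onePlusTPow 0)
    (hE : ∀ y : ℚ, egf (fun m => E m y) * (PowerSeries.exp ℚ + 1) = 2 * expXT y)
    (m : ℕ) :
    ∑ n ∈ Finset.range (m + 1), Bl n * (stirling2 m n : ℚ) =
      (1 / 2) * (L : ℚ) ^ m * E m 0 := by
  have hBoole := subst_exp_sub_one_egf_mul hBl
  have hEuler := egf_rescale_mul_one_add_exp_pow (by simpa [expXT_zero] using hE 0) L
  have hne : (1 + exp ℚ ^ L : ℚ⟦X⟧) ≠ 0 := fun h => by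
    simpa [constantCoeff_exp] using congrArg constantCoeff h
  have key : egf (fun m => (L : ℚ) ^ m * E m 0) = C 2 * (egf Bl).subst (exp ℚ - 1) :=
    mul_right_cancel₀ hne (by rw [hEuler, mul_assoc, hBoole, mul_one, map_ofNat])
  have hm := congrArg (coeff m) key
  rw [coeff_egf, coeff_C_mul, coeff_subst_exp_sub_one_egf] at hm
  field_simp at hm
  linarith

theorem boole_numbers_stirling2_eq_euler_numbers (L : ℕ) (hL : 0 < L)
    (Bl : ℕ → ℚ) (E : ℕ → ℚ → ℚ)
    (hBl : egf Bl * (1 + (1 + PowerSeries.X) ^ L) = onePlusTPow 0)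
    (hE : ∀ y : ℚ, egf (fun m => E m y) * (PowerSeries.exp ℚ + 1) = 2 * expXT y)
    (m : ℕ) :
    ∑ n ∈ Finset.range (m + 1), Bl n * (stirling2 m n : ℚ) =
      (1 / 2) * (L : ℚ) ^ m * E m 0 :=
  boole_numbers_stirling2_eq_euler_numbers_general L Bl E hBl hE m
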